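/- Let D be a distribution on X × {0,1}, f : X → ℝ a model, and g : X → {0,1} a group with η = E_{(x,y)∼D}[g(x)·(y − f(x))] and μ = E[g(x)] > 0. Then the Brier-score improvement from the optimal constant patch on g equals η²/μ: setting f'(x) = f(x) + η/μ for g(x)=1 and f'(x) = f(x) otherwise gives B(f) − B(f') = η²/μ ≥ η² (the last inequality since μ ≤ 1). -/

import Mathlib

/-!
Shifting the prediction by `c` on the group changes the squared error at `(x, y)` by
`2c(y - f x) - c²`, so the Brier score drops by `2cη - c²μ`. At `c = η/μ`, the maximiser of this
quadratic, the drop is `η²/μ`, which is at least `η²` because `μ ≤ 1`.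
-/

open scoped Classical
open Finset

noncomputable section

/-- Brier score of a model `f` under a weighted distribution `D` on `X × {0,1}`. -/
def brier {X : Type*} [Fintype X] (D : X → Bool → ℝ) (f : X → ℝ) : ℝ :=
  ∑ x, ∑ y, D x y * (f x - (if y then 1 else 0)) ^ 2

/-- Mass of a set `S ⊆ X` under the marginal of `D`. -/
def mass {X : Type*} [Fintype X] (D : X → Bool → ℝ) (S : Set X) : ℝ :=
  ∑ x, if x ∈ S then D x true + D x false else 0

/-- Conditional expectation of the label `y` given `x ∈ S`. -/
def condY {X : Type*} [Fintype X] (D : X → Bool → ℝ) (S : Set X) : ℝ :=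
  (∑ x, if x ∈ S then D x true else 0) / mass D S

/-- Conditional expectation of `f x` given `x ∈ S`. -/
def condExp {X : Type*} [Fintype X] (D : X → Bool → ℝ) (f : X → ℝ) (S : Set X) : ℝ :=
  (∑ x, if x ∈ S then (D x true + D x false) * f x else 0) / mass D S

theorem brier_sub_brier_shift {X : Type*} [Fintype X] (D : X → Bool → ℝ) (f : X → ℝ)
    (g : X → Bool) (c : ℝ) :
    brier D f - brier D (fun x => if g x then f x + c else f x) =
      2 * c * (∑ x, if g x then D x true - (D x true + D x false) * f x else 0) -
        c ^ 2 * mass D {x | g x = true} := by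
  simp only [brier, mass, Set.mem_ofPred_eq, mul_sum, ← sum_sub_distrib]
  refine sum_congr rfl fun x _ => ?_
  by_cases hg : g x <;>
    simp only [hg, Fintype.sum_bool, if_true, if_false, Bool.false_eq_true] <;> ring

theorem mass_le_one {X : Type*} [Fintype X] {D : X → Bool → ℝ} (hD : ∀ x y, 0 ≤ D x y)
    (hsum : ∑ x, (D x true + D x false) = 1) (S : Set X) : mass D S ≤ 1 := by
  rw [← hsum]
  refine sum_le_sum fun x _ => ?_
  split_ifs
  · exact le_rfl
  · exact add_nonneg (hD x true) (hD x false)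

/-- the optimal constant patch on a group `g` improves the Brier score by
exactly `η²/μ ≥ η²`, where `η = E[g(x)(y − f(x))]` and `μ = E[g(x)]`. -/
theorem eta_patch_improvement {X : Type*} [Fintype X] (D : X → Bool → ℝ)
    (hD : ∀ x y, 0 ≤ D x y) (hsum : ∑ x, (D x true + D x false) = 1)
    (f : X → ℝ) (g : X → Bool) (η μ : ℝ)
    (hη : η = ∑ x, if g x then D x true - (D x true + D x false) * f x else 0)
    (hμ : μ = mass D {x | g x = true}) (hμpos : 0 < μ) :
    brier D f - brier D (fun x => if g x then f x + η / μ else f x) = η ^ 2 / μ ∧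
      η ^ 2 / μ ≥ η ^ 2 := by
  have hμle : μ ≤ 1 := hμ ▸ mass_le_one hD hsum _
  refine ⟨?_, le_div_self (sq_nonneg η) hμpos hμle⟩
  rw [brier_sub_brier_shift, ← hη, ← hμ]
  field_simp
  ring
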